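/- Let x ∈ [0,1]^S with x ≤ Φ^max(x), define the x-increasing actions Act_x(s) = {a ∈ A(s) | x(s) ≤ ∑_{s'} P(s,a,s')·x(s')}, and let D_x^min be the distance operator restricted to x-increasing actions: D_x^min(r)(s) = 0 for s ∈ T, and 1 + min_{a ∈ Act_x(s)} min_{s' ∈ Post(s,a)} r(s') otherwise. If r ∈ (ℕ∞)^S satisfies D_x^min(r) ≤ r and for all s ∉ T, x(s) > 0 implies r(s) < ∞, then Pr^{max}_s(◇T) ≥ x(s) for all states s. -/

import Mathlib

open scoped ENNReal
open Classical

noncomputable section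

/-- Optimization direction: `dmin` for minimization, `dmax` for maximization. -/
inductive ODir | dmin | dmax

namespace ODir

/-- Apply the optimization direction to a set in a complete lattice. -/
def run {α : Type*} [CompleteLattice α] : ODir → Set α → α
  | dmin => sInf
  | dmax => sSup

/-- The dual optimization direction: ¬min = max, ¬max = min. -/
def neg : ODir → ODir
  | dmin => dmax
  | dmax => dmin

end ODir

/-- A finite Markov decision process with states `S` and actions `A`:
a transition probability function `P` such that for each state and action the
probabilities sum to `1` or `0`, and every state has at least one enabled action. -/
structure CertMDP (S A : Type) [Fintype S] [Fintype A] where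
  P : S → A → S → ℝ≥0∞
  sum_P : ∀ s a, (∑ s' : S, P s a s') = 1 ∨ (∑ s' : S, P s a s') = 0
  exists_enabled : ∀ s, ∃ a, (∑ s' : S, P s a s') = 1

namespace CertMDP

variable {S A : Type} [Fintype S] [Fintype A]

/-- The set of actions enabled in state `s`. -/
def enabled (M : CertMDP S A) (s : S) : Set A := {a | (∑ s' : S, M.P s a s') = 1}

/-- The `a`-successors of `s`. -/
def Post (M : CertMDP S A) (s : S) (a : A) : Set S := {s' | M.P s a s' ≠ 0}

/-- Memoryless deterministic strategies. -/
def Strat (M : CertMDP S A) := {σ : S → A // ∀ s, σ s ∈ M.enabled s}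

/-- Step-bounded reachability probability of `T` in the Markov chain induced by `σ`. -/
def prBounded (M : CertMDP S A) (σ : M.Strat) (T : Set S) : ℕ → S → ℝ≥0∞
  | 0, s => if s ∈ T then 1 else 0
  | n + 1, s => if s ∈ T then 1 else ∑ s' : S, M.P s (σ.1 s) s' * prBounded M σ T n s'

/-- Reachability probability of `T` from `s` in the Markov chain induced by `σ`. -/
def prReach (M : CertMDP S A) (σ : M.Strat) (T : Set S) (s : S) : ℝ≥0∞ :=
  ⨆ n, M.prBounded σ T n s

/-- Optimal (min/max over memoryless deterministic strategies) reachability probability. -/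
def optPr (M : CertMDP S A) (o : ODir) (T : Set S) (s : S) : ℝ≥0∞ :=
  o.run {p | ∃ σ : M.Strat, p = M.prReach σ T s}

/-- The distance operator `D^opt` on `(ℕ∞)^S`. -/
def dist (M : CertMDP S A) (o : ODir) (T : Set S) (r : S → ℕ∞) : S → ℕ∞ :=
  fun s => if s ∈ T then 0
    else 1 + o.run ((fun a => sInf (r '' M.Post s a)) '' M.enabled s)

/-- The complementary distance operator `D̃^opt` on `(ℕ∞)^S`, with Iverson bracket. -/
def cdist (M : CertMDP S A) (o : ODir) (T : Set S) (r : S → ℕ∞) : S → ℕ∞ :=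
  fun s => if s ∈ T then ⊤
    else o.run ((fun a => sInf (r '' M.Post s a) +
      (if ∃ u ∈ M.Post s a, ∃ v ∈ M.Post s a, r u ≠ r v then 1 else 0)) '' M.enabled s)

/-- The Bellman operator `Φ^opt` for reachability. -/
def bellman (M : CertMDP S A) (o : ODir) (T : Set S) (x : S → ℝ≥0∞) : S → ℝ≥0∞ :=
  fun s => if s ∈ T then 1
    else o.run ((fun a => ∑ s' : S, M.P s a s' * x s') '' M.enabled s)

/-- The distance operator `D^σ` in the Markov chain induced by strategy `σ`. -/
def distS (M : CertMDP S A) (σ : M.Strat) (T : Set S) (r : S → ℕ∞) : S → ℕ∞ :=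
  fun s => if s ∈ T then 0 else 1 + sInf (r '' M.Post s (σ.1 s))

/-- The Bellman operator `Φ^σ` in the Markov chain induced by strategy `σ`. -/
def bellmanS (M : CertMDP S A) (σ : M.Strat) (T : Set S) (x : S → ℝ≥0∞) : S → ℝ≥0∞ :=
  fun s => if s ∈ T then 1 else ∑ s' : S, M.P s (σ.1 s) s' * x s'

/-- Step-bounded cumulated expected reward (target states absorb with reward 0). -/
def erBounded (M : CertMDP S A) (σ : M.Strat) (T : Set S) (rew : S → ℝ≥0∞) : ℕ → S → ℝ≥0∞
  | 0, _ => 0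
  | n + 1, s => if s ∈ T then 0
      else rew s + ∑ s' : S, M.P s (σ.1 s) s' * erBounded M σ T rew n s'

/-- Expected reward accumulated until reaching `T` under `σ`, where paths never
reaching `T` receive reward `∞` (the `* = ∞` semantics). -/
def expRew (M : CertMDP S A) (σ : M.Strat) (T : Set S) (rew : S → ℝ≥0∞) (s : S) : ℝ≥0∞ :=
  if M.prReach σ T s = 1 then ⨆ n, M.erBounded σ T rew n s else ⊤

/-- Optimal expected reward accumulated until reaching `T`. -/
def optER (M : CertMDP S A) (o : ODir) (T : Set S) (rew : S → ℝ≥0∞) (s : S) : ℝ≥0∞ :=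
  o.run {p | ∃ σ : M.Strat, p = M.expRew σ T rew s}

/-- The Bellman operator `E^opt` for expected rewards. -/
def bellmanR (M : CertMDP S A) (o : ODir) (T : Set S) (rew : S → ℝ≥0∞) (x : S → ℝ≥0∞) :
    S → ℝ≥0∞ :=
  fun s => if s ∈ T then 0
    else rew s + o.run ((fun a => ∑ s' : S, M.P s a s' * x s') '' M.enabled s)

end CertMDP

/-- The `x`-increasing actions of state `s`. -/
def CertMDP.actInc {S A : Type} [Fintype S] [Fintype A] (M : CertMDP S A) (x : S → ℝ≥0∞)
    (s : S) : Set A :=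
  {a ∈ M.enabled s | x s ≤ ∑ s' : S, M.P s a s' * x s'}

/-- The distance operator restricted to `x`-increasing actions. -/
def CertMDP.distInc {S A : Type} [Fintype S] [Fintype A] (M : CertMDP S A) (T : Set S)
    (x : S → ℝ≥0∞) (r : S → ℕ∞) : S → ℕ∞ :=
  fun s => if s ∈ T then 0
    else 1 + sInf ((fun a => sInf (r '' M.Post s a)) '' M.actInc x s)


namespace CertMDP
variable {S A : Type} [Fintype S] [Fintype A] (M : CertMDP S A) (σ : M.Strat) (T : Set S)

lemma prBounded_le_one : ∀ n s, M.prBounded σ T n s ≤ 1 := by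
  intro n
  induction n with
  | zero => intro s; by_cases h : s ∈ T <;> simp [prBounded, h]
  | succ n ih =>
    intro s
    by_cases h : s ∈ T
    · simp [prBounded, h]
    · simp only [prBounded, if_neg h]
      calc ∑ s' : S, M.P s (σ.1 s) s' * M.prBounded σ T n s'
          ≤ ∑ s' : S, M.P s (σ.1 s) s' * 1 :=
            Finset.sum_le_sum fun i _ => mul_le_mul_right (ih i) _
        _ ≤ 1 := by
            simp only [mul_one]
            rcases M.sum_P s (σ.1 s) with h' | h' <;> simp [h']

lemma prBounded_mono : ∀ n s, M.prBounded σ T n s ≤ M.prBounded σ T (n + 1) s := by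
  intro n
  induction n with
  | zero => intro s; by_cases h : s ∈ T <;> simp [prBounded, h]
  | succ n ih =>
    intro s
    by_cases h : s ∈ T
    · simp [prBounded, h]
    · simp only [prBounded, if_neg h]
      exact Finset.sum_le_sum fun i _ => mul_le_mul_right (ih i) _

lemma prReach_of_mem {s : S} (hs : s ∈ T) : M.prReach σ T s = 1 := by
  refine le_antisymm (iSup_le fun n => prBounded_le_one M σ T n s) ?_
  have h0 : M.prBounded σ T 0 s = 1 := by simp [prBounded, hs]
  exact h0 ▸ le_iSup (fun n => M.prBounded σ T n s) 0

lemma prReach_fix {s : S} (hs : s ∉ T) :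
    M.prReach σ T s = ∑ s' : S, M.P s (σ.1 s) s' * M.prReach σ T s' := by
  have h1 : M.prReach σ T s = ⨆ n, M.prBounded σ T (n + 1) s :=
    le_antisymm (iSup_le fun n => le_trans (prBounded_mono M σ T n s)
        (le_iSup (fun n => M.prBounded σ T (n + 1) s) n))
      (iSup_le fun n => le_iSup (fun n => M.prBounded σ T n s) (n + 1))
  rw [h1]
  simp only [prBounded, if_neg hs]
  rw [eq_comm]
  calc ∑ s' : S, M.P s (σ.1 s) s' * M.prReach σ T s'
      = ∑ s' : S, ⨆ n, M.P s (σ.1 s) s' * M.prBounded σ T n s' := by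
        simp only [prReach, ENNReal.mul_iSup]
    _ = ⨆ n, ∑ s' : S, M.P s (σ.1 s) s' * M.prBounded σ T n s' :=
        ENNReal.finsetSum_iSup_of_monotone fun s' a b hab =>
          mul_le_mul_right
            ((monotone_nat_of_le_succ fun n => prBounded_mono M σ T n s') hab) _
end CertMDP

/-- Certificates for lower bounds on maximal reachability probabilities without an
explicit witness strategy. -/
theorem stmt16 {S A : Type} [Fintype S] [Fintype A] (M : CertMDP S A) (T : Set S)
    (x : S → ℝ≥0∞) (r : S → ℕ∞) (hx1 : ∀ s, x s ≤ 1)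
    (hb : x ≤ M.bellman ODir.dmax T x)
    (hD : M.distInc T x r ≤ r)
    (h3 : ∀ s ∉ T, 0 < x s → r s < ⊤) :
    ∀ s, x s ≤ M.optPr ODir.dmax T s := by
  -- extract good actions from the distance certificate
  have key : ∀ s, s ∉ T → r s ≠ ⊤ →
      ∃ a, a ∈ M.actInc x s ∧ ∃ s', M.P s a s' ≠ 0 ∧ r s' < r s := by
    intro s hsT hrs
    have h := hD s
    rw [CertMDP.distInc, if_neg hsT] at h
    set m := sInf ((fun a => sInf (r '' M.Post s a)) '' M.actInc x s) with hm
    have hmtop : m ≠ ⊤ := by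
      intro e
      rw [e, add_top, top_le_iff] at h
      exact hrs h
    have h' : m < r s := by
      rw [add_comm] at h
      exact (ENat.add_one_le_iff hmtop).mp h
    obtain ⟨v, ⟨a, ha, rfl⟩, hv⟩ := sInf_lt_iff.mp h'
    obtain ⟨u, ⟨s', hs', rfl⟩, hu⟩ := sInf_lt_iff.mp hv
    exact ⟨a, ha, s', hs', hu⟩
  -- build a strategy
  have hsig : ∀ s, ∃ a, a ∈ M.enabled s ∧ ((s ∉ T ∧ r s ≠ ⊤) →
      (x s ≤ ∑ s' : S, M.P s a s' * x s') ∧ ∃ s', M.P s a s' ≠ 0 ∧ r s' < r s) := by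
    intro s
    by_cases hc : s ∉ T ∧ r s ≠ ⊤
    · obtain ⟨a, ha, hs'⟩ := key s hc.1 hc.2
      exact ⟨a, ha.1, fun _ => ⟨ha.2, hs'⟩⟩
    · obtain ⟨a, ha⟩ := M.exists_enabled s
      exact ⟨a, ha, fun h => absurd h hc⟩
  let σ : M.Strat := ⟨fun s => (hsig s).choose, fun s => (hsig s).choose_spec.1⟩
  have hσ : ∀ s, (s ∉ T ∧ r s ≠ ⊤) →
      (x s ≤ ∑ s' : S, M.P s (σ.1 s) s' * x s') ∧
        ∃ s', M.P s (σ.1 s) s' ≠ 0 ∧ r s' < r s :=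
    fun s => (hsig s).choose_spec.2
  set y := M.prReach σ T with hy
  have hyle : ∀ s, y s ≤ 1 := fun s => iSup_le fun n => M.prBounded_le_one σ T n s
  -- the gap function
  set f : S → ℝ≥0∞ := fun s => x s - y s with hf
  have hkey : ∀ s, f s = 0 := by
    by_contra hcon
    push_neg at hcon
    obtain ⟨s₀, hs₀⟩ := hcon
    have hne : (Finset.univ : Finset S).Nonempty := ⟨s₀, Finset.mem_univ _⟩
    obtain ⟨sm, -, hsm⟩ := Finset.exists_max_image Finset.univ f hne
    set δ := f sm with hδ
    have hδ0 : δ ≠ 0 := fun h => hs₀ (le_antisymm (h ▸ hsm s₀ (Finset.mem_univ _)) zero_le)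
    obtain ⟨t, htF, htmin⟩ := Finset.exists_min_image
      (Finset.univ.filter fun s => f s = δ) r ⟨sm, by simp [hδ]⟩
    have htδ : f t = δ := (Finset.mem_filter.mp htF).2
    have htT : t ∉ T := by
      intro hT
      have h1 : y t = 1 := M.prReach_of_mem σ T hT
      apply hδ0
      rw [← htδ, hf]
      simp only [h1]
      exact tsub_eq_zero_iff_le.mpr (hx1 t)
    have hxt : 0 < x t := by
      have : δ ≤ x t := htδ ▸ tsub_le_self
      exact lt_of_lt_of_le (pos_iff_ne_zero.mpr hδ0) this
    have hrt : r t ≠ ⊤ := (h3 t htT hxt).ne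
    obtain ⟨hinc, s', hP, hrs'⟩ := hσ t ⟨htT, hrt⟩
    have hfixt : y t = ∑ s'' : S, M.P t (σ.1 t) s'' * y s'' := M.prReach_fix σ T htT
    have hsumP : ∑ s'' : S, M.P t (σ.1 t) s'' = 1 := σ.2 t
    have hPle1 : ∀ s'', M.P t (σ.1 t) s'' ≤ 1 := fun s'' =>
      le_trans (Finset.single_le_sum (f := fun i => M.P t (σ.1 t) i)
        (fun i _ => zero_le) (Finset.mem_univ s'')) hsumP.le
    have hchain : δ ≤ ∑ s'' : S, M.P t (σ.1 t) s'' * f s'' := by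
      calc δ = x t - y t := htδ.symm
        _ ≤ (∑ s'' : S, M.P t (σ.1 t) s'' * x s'') -
            (∑ s'' : S, M.P t (σ.1 t) s'' * y s'') := tsub_le_tsub hinc hfixt.ge
        _ ≤ ∑ s'' : S, (M.P t (σ.1 t) s'' * x s'' - M.P t (σ.1 t) s'' * y s'') := by
            refine tsub_le_iff_right.mpr ?_
            rw [← Finset.sum_add_distrib]
            exact Finset.sum_le_sum fun i _ => le_tsub_add
        _ ≤ ∑ s'' : S, M.P t (σ.1 t) s'' * f s'' := by
            refine Finset.sum_le_sum fun i _ => ?_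
            refine tsub_le_iff_right.mpr ?_
            rw [← mul_add]
            exact mul_le_mul_right le_tsub_add _
    have hfs' : f s' < δ := by
      refine lt_of_le_of_ne (hsm s' (Finset.mem_univ _)) fun h => ?_
      have := htmin s' (Finset.mem_filter.mpr ⟨Finset.mem_univ _, h⟩)
      exact absurd this (not_le.mpr hrs')
    have hstrict : (∑ s'' : S, M.P t (σ.1 t) s'' * f s'') <
        ∑ s'' : S, M.P t (σ.1 t) s'' * δ := by
      have hterm : M.P t (σ.1 t) s' * f s' < M.P t (σ.1 t) s' * δ :=
        (ENNReal.mul_lt_mul_iff_right hP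
          (ne_top_of_le_ne_top ENNReal.one_ne_top (hPle1 s'))).mpr hfs'
      have hfle1 : ∀ i, f i ≤ 1 := fun i => le_trans tsub_le_self (hx1 i)
      have hrest : (∑ s'' ∈ Finset.univ.erase s', M.P t (σ.1 t) s'' * f s'') ≠ ⊤ := by
        refine ne_top_of_le_ne_top ENNReal.one_ne_top ?_
        calc ∑ s'' ∈ Finset.univ.erase s', M.P t (σ.1 t) s'' * f s''
            ≤ ∑ s'' ∈ Finset.univ.erase s', M.P t (σ.1 t) s'' * 1 :=
              Finset.sum_le_sum fun i _ => mul_le_mul_right (hfle1 i) _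
          _ ≤ ∑ s'' : S, M.P t (σ.1 t) s'' * 1 :=
              Finset.sum_le_sum_of_subset (Finset.subset_univ _)
          _ = 1 := by simp only [mul_one]; exact hsumP
      rw [← Finset.add_sum_erase _ _ (Finset.mem_univ s'),
        ← Finset.add_sum_erase _ _ (Finset.mem_univ s')]
      exact ENNReal.add_lt_add_of_lt_of_le hrest hterm
        (Finset.sum_le_sum fun i _ => mul_le_mul_right (hsm i (Finset.mem_univ _)) _)
    have hPd : (∑ s'' : S, M.P t (σ.1 t) s'' * δ) = δ := by
      rw [← Finset.sum_mul, hsumP, one_mul]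
    exact absurd (hchain.trans_lt (hstrict.trans_eq hPd)) (lt_irrefl δ)
  intro s
  have hxy : x s ≤ y s := tsub_eq_zero_iff_le.mp (hkey s)
  refine hxy.trans ?_
  exact le_sSup ⟨σ, rfl⟩
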